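/- arXiv:2310.16626 — 4 statements merged into one kernel-verified Lean document; each statement's English description precedes it below -/
import Mathlib

section
/- Let G be a finite directed acyclic graph whose vertex set is the disjoint union of two sets X and Y, and assume G has no edge directed from a vertex of Y to a vertex of X. Then for every X_j ∈ X and Y_k ∈ Y, the edge X_j → Y_k is present in G if and only if for every subset S ⊆ Y \ {Y_k}, the vertices X_j and Y_k are d-connected given S ∪ (X \ {X_j}). -/
/-! Directed graphs are modeled as binary relations `E : V → V → Prop`,
where `E a b` means there is an edge `a → b`. -/

section Graph

variable {V : Type*}

/-- A path between `u` and `v` in the directed graph `E`: a list of distinct vertices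
starting at `u`, ending at `v`, in which consecutive vertices are joined by an edge
in one direction or the other. -/
def IsPath (E : V → V → Prop) (u v : V) (p : List V) : Prop :=
  p.Nodup ∧ p.head? = some u ∧ p.getLast? = some v ∧
    p.Chain' (fun a b => E a b ∨ E b a)

/-- `b` is an internal (non-endpoint) vertex of the path `p`:
it occurs with a neighbour on each side. -/
def IsInternal (p : List V) (b : V) : Prop :=
  ∃ a c, [a, b, c] <:+: p

/-- `b` is a collider on the path `p`: both adjacent edges point into `b`. -/
def IsCollider (E : V → V → Prop) (p : List V) (b : V) : Prop :=
  ∃ a c, [a, b, c] <:+: p ∧ E a b ∧ E c b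

/-- `d` is a descendant of `b`: `d` is reachable from `b` by a directed path
(`b` is a descendant of itself). -/
def Descendant (E : V → V → Prop) (b d : V) : Prop :=
  Relation.ReflTransGen E b d

/-- The path `p` between `u` and `v` is active given the conditioning set `Z`:
every collider on `p` has a descendant in `Z` (in particular, is in `Z`), and
no non-collider internal vertex of `p` lies in `Z`. -/
def IsActivePath (E : V → V → Prop) (u v : V) (Z : Set V) (p : List V) : Prop :=
  IsPath E u v p ∧
    (∀ b, IsCollider E p b → ∃ d, Descendant E b d ∧ d ∈ Z) ∧
    (∀ b, IsInternal p b → ¬IsCollider E p b → b ∉ Z)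

/-- `u` and `v` are d-connected given `Z` if some path between them is active given `Z`. -/
def DConnected (E : V → V → Prop) (u v : V) (Z : Set V) : Prop :=
  ∃ p, IsActivePath E u v Z p

/-- `u` and `v` are d-separated given `Z` if no path between them is active given `Z`. -/
def DSeparated (E : V → V → Prop) (u v : V) (Z : Set V) : Prop :=
  ¬DConnected E u v Z

/-- A directed graph is acyclic if it has no directed cycle. -/
def IsAcyclicGraph (E : V → V → Prop) : Prop :=
  ∀ v, ¬Relation.TransGen E v v

end Graph

section Aux
variable {V : Type*}

lemma infix_getElem {a b c : V} {p : List V} (h : [a,b,c] <:+: p) :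
    ∃ n, p[n]? = some a ∧ p[n+1]? = some b ∧ p[n+2]? = some c := by
  obtain ⟨s, t, rfl⟩ := h
  refine ⟨s.length, ?_, ?_, ?_⟩ <;>
    rw [List.append_assoc, List.getElem?_append_right (by omega)] <;> simp

lemma neighbors_unique {a b c a' c' : V} {p : List V} (hnd : p.Nodup)
    (h1 : [a,b,c] <:+: p) (h2 : [a',b,c'] <:+: p) : a = a' ∧ c = c' := by
  obtain ⟨n, ha, hb, hc⟩ := infix_getElem h1
  obtain ⟨m, ha', hb', hc'⟩ := infix_getElem h2
  have hlt : n+1 < p.length := by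
    by_contra hcon
    rw [List.getElem?_eq_none (by omega)] at hb
    cases hb
  have hnm : n + 1 = m + 1 := (List.getElem?_inj hlt hnd).mp (hb.trans hb'.symm)
  have hnm' : n = m := by omega
  subst hnm'
  exact ⟨Option.some_inj.mp (ha ▸ ha'), Option.some_inj.mp (hc ▸ hc')⟩

lemma tail_induction (E : V → V → Prop) (Yk Xj : V) (Z : Set V) (p : List V)
    (hch : p.Chain' (fun a b => E a b ∨ E b a))
    (hhead : p.head? = some Xj)
    (hcol : ∀ b, IsCollider E p b → ∃ d, Descendant E b d ∧ d ∈ Z)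
    (hdesc : ∀ v, Relation.TransGen E Yk v → ∀ d, Relation.ReflTransGen E v d → d ∉ Z)
    (hXjY : ¬ Relation.TransGen E Yk Xj) :
    ∀ (l : List V) (u w : V), Relation.TransGen E Yk w → E u w →
      (l.reverse ++ [w, u]) <+: p → False := by
  intro l
  induction l with
  | nil =>
    intro u w hYw huw hpre
    obtain ⟨t, ht⟩ := hpre
    have hw : w = Xj := by
      rw [← ht] at hhead
      simpa using hhead
    exact hXjY (hw ▸ hYw)
  | cons x l' ih =>
    intro u w hYw huw hpre
    obtain ⟨t, ht⟩ := hpre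
    have hinf : [x, w, u] <:+: p := ⟨l'.reverse, t, by simpa using ht⟩
    have hxw : E x w ∨ E w x := by
      have h3 := hch.infix hinf
      simp [List.isChain_cons_cons] at h3
      exact h3.1
    cases hxw with
    | inl hxw =>
      obtain ⟨d, hd, hdZ⟩ := hcol w ⟨x, u, hinf, hxw, huw⟩
      exact hdesc w hYw d hd hdZ
    | inr hwx =>
      refine ih w x (hYw.tail hwx) hwx ⟨u :: t, ?_⟩
      rw [← ht]; simp

end Aux



/-- Let `G` be a finite DAG whose vertex set is the disjoint union of
`X` and `Y`, with no edge directed from a vertex of `Y` to a vertex of `X`. Then for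
`Xj ∈ X` and `Yk ∈ Y`, the edge `Xj → Yk` is present if and only if for every subset
`S ⊆ Y \ {Yk}`, the vertices `Xj` and `Yk` are d-connected given `S ∪ (X \ {Xj})`. -/
theorem edge_iff_dconnected {V : Type*} [Fintype V] (E : V → V → Prop)
    (X Y : Set V) (hdisj : Disjoint X Y) (hcover : X ∪ Y = Set.univ)
    (hacyc : IsAcyclicGraph E)
    (hnoYX : ∀ a ∈ Y, ∀ b ∈ X, ¬E a b)
    (Xj : V) (hXj : Xj ∈ X) (Yk : V) (hYk : Yk ∈ Y) :
    E Xj Yk ↔ ∀ S ⊆ Y \ {Yk}, DConnected E Xj Yk (S ∪ (X \ {Xj})) := by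
  have hmem : ∀ v : V, v ∈ X ∨ v ∈ Y := fun v =>
    Set.eq_univ_iff_forall.mp hcover v
  have hne : Xj ≠ Yk := fun h => Set.disjoint_left.mp hdisj hXj (h ▸ hYk)
  constructor
  · intro hE S _
    refine ⟨[Xj, Yk], ⟨?_, rfl, by simp, List.isChain_pair.mpr (Or.inl hE)⟩, ?_, ?_⟩
    · simp [hne]
    · rintro b ⟨a, c, hinf, -, -⟩
      have := hinf.length_le; simp at this
    · rintro b ⟨a, c, hinf⟩ -
      have := hinf.length_le; simp at this
  · intro h
    by_contra hE
    set S : Set V := {v | v ∈ Y ∧ ¬ Relation.ReflTransGen E Yk v} with hSdef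
    have hScond : S ⊆ Y \ {Yk} := by
      rintro v ⟨hvY, hvD⟩
      exact ⟨hvY, fun hv => hvD (hv ▸ Relation.ReflTransGen.refl)⟩
    obtain ⟨p, ⟨hnd, hhead, hlast, hch⟩, hcol, hnoncol⟩ := h S hScond
    set Z : Set V := S ∪ (X \ {Xj}) with hZdef
    -- descendants of Yk lie in Y
    have hYclosed : ∀ v, Relation.ReflTransGen E Yk v → v ∈ Y := by
      intro v hv
      induction hv with
      | refl => exact hYk
      | tail _ e ih =>
        rcases hmem _ with hX' | hY'
        · exact absurd e (hnoYX _ ih _ hX')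
        · exact hY'
    have hdesc : ∀ v, Relation.TransGen E Yk v →
        ∀ d, Relation.ReflTransGen E v d → d ∉ Z := by
      intro v hv d hd hdZ
      have hYkd : Relation.ReflTransGen E Yk d := hv.to_reflTransGen.trans hd
      have hdY : d ∈ Y := hYclosed d hYkd
      rcases hdZ with ⟨-, hnd'⟩ | ⟨hdX, -⟩
      · exact hnd' hYkd
      · exact Set.disjoint_left.mp hdisj hdX hdY
    have hXjY : ¬ Relation.TransGen E Yk Xj := fun hcon =>
      Set.disjoint_left.mp hdisj hXj (hYclosed Xj hcon.to_reflTransGen)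
    -- decompose p from the back
    rcases p.eq_nil_or_concat with rfl | ⟨p₁, z, rfl⟩
    · simp at hhead
    rw [List.concat_eq_append] at *
    have hz : z = Yk := by
      rw [List.getLast?_concat] at hlast
      exact Option.some_inj.mp hlast
    subst z
    rcases p₁.eq_nil_or_concat with rfl | ⟨p₂, w, rfl⟩
    · simp at hhead
      exact hne hhead.symm
    rw [List.concat_eq_append] at *
    have hinfwYk : [w, Yk] <:+: (p₂ ++ [w] ++ [Yk]) := ⟨p₂, [], by simp⟩
    have hwYk : E w Yk ∨ E Yk w := by
      have h2 := hch.infix hinfwYk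
      simpa [List.isChain_pair] using h2
    cases hwYk with
    | inr hYkw =>
      exact tail_induction E Yk Xj Z _ hch hhead hcol hdesc hXjY
        p₂.reverse Yk w (.single hYkw) hYkw ⟨[], by simp⟩
    | inl hwYk =>
      rcases p₂.eq_nil_or_concat with rfl | ⟨p₃, x, rfl⟩
      · simp at hhead
        exact hE (hhead ▸ hwYk)
      rw [List.concat_eq_append] at *
      have hinf : [x, w, Yk] <:+: (p₃ ++ [x] ++ [w] ++ [Yk]) := ⟨p₃, [], by simp⟩
      have hwne : w ≠ Yk := by
        have := (hinf.sublist.nodup hnd)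
        simp at this
        exact this.2
      by_cases hcw : IsCollider E (p₃ ++ [x] ++ [w] ++ [Yk]) w
      · obtain ⟨a, c, hin2, haw, hcw'⟩ := hcw
        obtain ⟨ha, hc⟩ := neighbors_unique hnd hin2 hinf
        exact hacyc Yk (Relation.TransGen.head (hc ▸ hcw') (.single hwYk))
      · have hwZ := hnoncol w ⟨x, Yk, hinf⟩ hcw
        rcases hmem w with hwX | hwY
        · have hwXj : w = Xj := by
            by_contra hcon
            exact hwZ (Or.inr ⟨hwX, hcon⟩)
          exact hE (hwXj ▸ hwYk)
        · have hrt : Relation.ReflTransGen E Yk w := by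
            by_contra hcon
            exact hwZ (Or.inl ⟨hwY, hcon⟩)
          exact hacyc Yk (Relation.TransGen.tail' hrt hwYk)
end

section
/- Let G be a finite directed acyclic graph whose vertex set is the disjoint union of two sets X and Y, and assume G has no edge directed from a vertex of Y to a vertex of X. Let X_j ∈ X and Y_k ∈ Y be such that the edge X_j → Y_k is NOT present in G. Then there exists a subset S ⊆ Y \ {Y_k} such that X_j and Y_k are d-separated given S ∪ (X \ {X_j}). -/
private lemma infix_reverse' {V : Type*} {p : List V} {a b c : V} :
    [a, b, c] <:+: p.reverse ↔ [c, b, a] <:+: p := by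
  rw [show ([a, b, c] : List V) = [c, b, a].reverse by simp, List.reverse_infix]

private lemma isCollider_reverse' {V : Type*} {E : V → V → Prop} {p : List V} {b : V} :
    IsCollider E p.reverse b ↔ IsCollider E p b := by
  constructor
  · rintro ⟨a, c, h, h1, h2⟩; exact ⟨c, a, infix_reverse'.mp h, h2, h1⟩
  · rintro ⟨a, c, h, h1, h2⟩; exact ⟨c, a, infix_reverse'.mpr h, h2, h1⟩

private lemma isInternal_reverse' {V : Type*} {p : List V} {b : V} :
    IsInternal p.reverse b ↔ IsInternal p b := by
  constructor
  · rintro ⟨a, c, h⟩; exact ⟨c, a, infix_reverse'.mp h⟩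
  · rintro ⟨a, c, h⟩; exact ⟨c, a, infix_reverse'.mpr h⟩

/-- Let `G` be a finite DAG whose vertex set is the disjoint union of
`X` and `Y`, with no edge directed from a vertex of `Y` to a vertex of `X`. If the
edge `Xj → Yk` (with `Xj ∈ X`, `Yk ∈ Y`) is not present in `G`, then there is a subset
`S ⊆ Y \ {Yk}` such that `Xj` and `Yk` are d-separated given `S ∪ (X \ {Xj})`. -/
theorem exists_dseparating_set {V : Type*} [Fintype V] (E : V → V → Prop)
    (X Y : Set V) (hdisj : Disjoint X Y) (hcover : X ∪ Y = Set.univ)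
    (hacyc : IsAcyclicGraph E)
    (hnoYX : ∀ a ∈ Y, ∀ b ∈ X, ¬E a b)
    (Xj : V) (hXj : Xj ∈ X) (Yk : V) (hYk : Yk ∈ Y)
    (hnoedge : ¬E Xj Yk) :
    ∃ S ⊆ Y \ {Yk}, DSeparated E Xj Yk (S ∪ (X \ {Xj})) := by
  classical
  have huniv : ∀ v : V, v ∈ X ∪ Y := fun v => hcover ▸ Set.mem_univ v
  have hXjYk : Xj ≠ Yk := fun h => Set.disjoint_left.mp hdisj hXj (h ▸ hYk)
  refine ⟨{y | y ∈ Y ∧ y ≠ Yk ∧ E y Yk}, fun y hy => ⟨hy.1, hy.2.1⟩, ?_⟩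
  set S : Set V := {y | y ∈ Y ∧ y ≠ Yk ∧ E y Yk} with hSdef
  set Z : Set V := S ∪ (X \ {Xj}) with hZdef
  rintro ⟨p, ⟨hnd, hhead, hlast, hchain⟩, hcol, hnc⟩
  have hqnd : p.reverse.Nodup := List.nodup_reverse.mpr hnd
  have hqhead : p.reverse.head? = some Yk := by rw [List.head?_reverse]; exact hlast
  have hqlast : p.reverse.getLast? = some Xj := by rw [List.getLast?_reverse]; exact hhead
  have hqchain : p.reverse.Chain' (fun a b => E a b ∨ E b a) := by
    apply List.isChain_reverse.mpr
    exact List.IsChain.imp (fun a b h => h.symm) hchain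
  have hcolq : ∀ b, IsCollider E p.reverse b → ∃ d, Descendant E b d ∧ d ∈ Z :=
    fun b hb => hcol b (isCollider_reverse'.mp hb)
  have hncq : ∀ b, IsInternal p.reverse b → ¬IsCollider E p.reverse b → b ∉ Z :=
    fun b hi hc => hnc b (isInternal_reverse'.mp hi)
      (fun h => hc (isCollider_reverse'.mpr h))
  have hYc : ∀ u, u ∈ Y → ∀ d, Relation.ReflTransGen E u d → d ∈ Y := by
    intro u hu d hd
    induction hd with
    | refl => exact hu
    | tail h e ih =>
      rcases huniv _ with hX' | hY'
      · exact absurd e (hnoYX _ ih _ hX')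
      · exact hY'
  obtain ⟨t, hqt⟩ : ∃ t, p.reverse = Yk :: t := by
    cases hq : p.reverse with
    | nil => rw [hq] at hqhead; simp at hqhead
    | cons h t => rw [hq] at hqhead; simp at hqhead; exact ⟨t, by rw [hqhead]⟩
  cases t with
  | nil =>
    rw [hqt] at hqlast; simp at hqlast
    exact hXjYk hqlast.symm
  | cons w rest =>
    have hedge : E Yk w ∨ E w Yk := by
      have h := hqchain; rw [hqt] at h; exact (List.isChain_cons_cons.mp h).1
    rcases hedge with hYkw | hwYk
    · -- Case 2: directed edge Yk → w; follow the directed chain to a contradiction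
      have hwY : w ∈ Y := by
        rcases huniv w with h | h
        · exact absurd hYkw (hnoYX Yk hYk w h)
        · exact h
      have key : ∀ rest2 : List V, ∀ s : List V, ∀ a u : V,
          p.reverse = s ++ a :: u :: rest2 → E a u → Relation.TransGen E Yk u →
          u ∈ Y → False := by
        intro rest2
        induction rest2 with
        | nil =>
          intro s a u hqe hau htg huY
          have hlu : p.reverse.getLast? = some u := by
            rw [hqe]; simp [List.getLast?_append]
          rw [hqlast] at hlu
          have : Xj = u := by simpa using hlu
          exact Set.disjoint_left.mp hdisj hXj (this ▸ huY)
        | cons c rest3 ih =>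
          intro s a u hqe hau htg huY
          have hinf : [a, u, c] <:+: p.reverse := ⟨s, rest3, by rw [hqe]; simp⟩
          have hch3 := hqchain.infix hinf
          have hedge2 : E u c ∨ E c u := (List.isChain_cons_cons.mp (List.isChain_cons_cons.mp hch3).2).1
          rcases hedge2 with huc | hcu
          · have hcY : c ∈ Y := by
              rcases huniv c with h | h
              · exact absurd huc (hnoYX u huY c h)
              · exact h
            exact ih (s ++ [a]) u c (by rw [hqe]; simp) huc (htg.tail huc) hcY
          · have hcolu : IsCollider E p.reverse u := ⟨a, c, hinf, hau, hcu⟩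
            obtain ⟨d, hdd, hdZ⟩ := hcolq u hcolu
            have hdY : d ∈ Y := hYc u huY d hdd
            rcases hdZ with hdS | hdX
            · exact hacyc Yk ((htg.trans_left hdd).tail hdS.2.2)
            · exact Set.disjoint_left.mp hdisj hdX.1 hdY
      exact key rest [] Yk w (by rw [hqt]; simp) hYkw (Relation.TransGen.single hYkw) hwY
    · -- Case 1: edge w → Yk; then w is a conditioned non-collider next to Yk
      cases rest with
      | nil =>
        rw [hqt] at hqlast; simp at hqlast
        exact hnoedge (hqlast ▸ hwYk)
      | cons c rest' =>
        have hw : w ∉ c :: rest' := by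
          have h := hqnd; rw [hqt] at h
          exact (List.nodup_cons.mp (List.nodup_cons.mp h).2).1
        have hint : IsInternal p.reverse w := ⟨Yk, c, ⟨[], rest', by rw [hqt]; simp⟩⟩
        have hnotcol : ¬IsCollider E p.reverse w := by
          rintro ⟨a, c', ⟨s, t, hst⟩, ha, hc'⟩
          rw [hqt] at hst
          cases s with
          | nil =>
            simp only [List.nil_append, List.cons_append, List.cons.injEq] at hst
            exact hacyc Yk ((Relation.TransGen.single (hst.1 ▸ ha)).tail hwYk)
          | cons x s' =>
            simp only [List.cons_append, List.cons.injEq] at hst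
            obtain ⟨hx, hst2⟩ := hst
            cases s' with
            | nil =>
              simp only [List.nil_append, List.cons_append, List.cons.injEq] at hst2
              exact hw (hst2.2.1 ▸ List.mem_cons_self)
            | cons y s'' =>
              simp only [List.cons_append, List.cons.injEq] at hst2
              apply hw
              rw [← hst2.2]
              simp
        have hwZ : w ∉ Z := hncq w hint hnotcol
        apply hwZ
        rcases huniv w with hwX | hwY2
        · exact Or.inr ⟨hwX, fun h => hnoedge ((Set.mem_singleton_iff.mp h) ▸ hwYk)⟩
        · refine Or.inl ⟨hwY2, fun h => hacyc Yk (Relation.TransGen.single (h ▸ hwYk)), hwYk⟩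
end

section
/- Let G be a finite directed acyclic graph, let v be a vertex, and let u be a vertex distinct from v such that u is not a parent of v and u is not a descendant of v. Then u and v are d-separated given Pa(v), the set of parents of v. -/
section AuxLemmas

variable {V : Type*}

/-- In a `Nodup` list, the triple of consecutive entries around a vertex is unique. -/
lemma triple_unique {p : List V} (hnd : p.Nodup) {a b c a' c' : V}
    (h1 : [a, b, c] <:+: p) (h2 : [a', b, c'] <:+: p) : a = a' ∧ c = c' := by
  obtain ⟨s, t, hst⟩ := h1
  obtain ⟨s', t', hst'⟩ := h2
  have key : ∀ (x z : V) (s t : List V), s ++ [x, b, z] ++ t = p →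
      p[s.length + 1]? = some b := by
    intro x z s t h
    rw [← h, List.append_assoc, List.getElem?_append_right (by omega)]
    simp
  have hb1 := key a c s t hst
  have hb2 := key a' c' s' t' hst'
  obtain ⟨hl1, he1⟩ := List.getElem?_eq_some_iff.mp hb1
  obtain ⟨hl2, he2⟩ := List.getElem?_eq_some_iff.mp hb2
  have hlen : s.length + 1 = s'.length + 1 :=
    (hnd.getElem_inj_iff (hi := hl1) (hj := hl2)).mp (he1.trans he2.symm)
  have hslen : s.length = s'.length := by omega
  rw [List.append_assoc] at hst
  rw [List.append_assoc] at hst'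
  obtain ⟨hs, hrest⟩ := List.append_inj (hst.trans hst'.symm) hslen
  simp only [List.cons_append, List.cons.injEq] at hrest
  exact ⟨hrest.1, hrest.2.2.1⟩

/-- Key induction: walking along the reversed path away from `v`, if the current edge points
forward (away from `v`) and the current vertex is a descendant of `v`, we reach a
contradiction. -/
lemma aux_walk (E : V → V → Prop) (hacyc : IsAcyclicGraph E) (u v : V) (p : List V)
    (hnd : p.Nodup)
    (hqlast : p.reverse.getLast? = some u)
    (hchq : p.reverse.Chain' (fun a b => E a b ∨ E b a))
    (hcol : ∀ b, IsCollider E p b → ∃ d, Descendant E b d ∧ E d v)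
    (hdesc : ¬Descendant E v u) :
    ∀ (t : List V) (x y : V), (x :: y :: t) <:+ p.reverse → E x y →
      Relation.ReflTransGen E v y → False := by
  intro t
  induction t with
  | nil =>
    intro x y hsuf _ hvy
    obtain ⟨s, hs⟩ := hsuf
    rw [← hs] at hqlast
    rw [List.getLast?_append_of_ne_nil s (by simp)] at hqlast
    simp only [List.getLast?_cons_cons, List.getLast?_singleton, Option.some.injEq] at hqlast
    exact hdesc (hqlast ▸ hvy)
  | cons z t' ih =>
    intro x y hsuf hxy hvy
    have hsuf2 : (y :: z :: t') <:+ p.reverse :=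
      (List.suffix_cons x _).trans hsuf
    have hchs := hchq.suffix hsuf
    have hyz : E y z ∨ E z y := (List.isChain_cons_cons.mp (List.isChain_cons_cons.mp hchs).2).1
    rcases hyz with hyz | hzy
    · exact ih y z hsuf2 hyz (hvy.tail hyz)
    · obtain ⟨s, hs⟩ := hsuf
      have hinf : [x, y, z] <:+: p.reverse := ⟨s, t', by rw [← hs]; simp⟩
      have hinfp : [z, y, x] <:+: p := by
        have h2 : ([z, y, x] : List V).reverse <:+: p.reverse := by simpa using hinf
        exact List.reverse_infix.mp h2
      obtain ⟨d, hyd, hdv⟩ := hcol y ⟨z, x, hinfp, hzy, hxy⟩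
      exact hacyc v (Relation.TransGen.tail' (hvy.trans hyd) hdv)

end AuxLemmas

/-- In a finite DAG, if `u ≠ v`, `u` is not a parent of `v` and `u` is
not a descendant of `v`, then `u` and `v` are d-separated given the set of parents of `v`. -/
theorem dseparated_given_parents {V : Type*} [Fintype V] (E : V → V → Prop)
    (hacyc : IsAcyclicGraph E) (u v : V) (huv : u ≠ v)
    (hpar : ¬E u v) (hdesc : ¬Descendant E v u) :
    DSeparated E u v {w | E w v} := by
  rintro ⟨p, ⟨hnd, hhead, hlast, hch⟩, hcol, hncol⟩
  have hchq : p.reverse.Chain' (fun a b => E a b ∨ E b a) := by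
    refine List.isChain_reverse.mpr ?_
    exact List.IsChain.imp (fun a b h => Or.symm h) hch
  have hqlast : p.reverse.getLast? = some u := by rw [List.getLast?_reverse]; exact hhead
  have hqhead : p.reverse.head? = some v := by rw [List.head?_reverse]; exact hlast
  have hcol' : ∀ b, IsCollider E p b → ∃ d, Descendant E b d ∧ E d v := fun b hb => hcol b hb
  rcases hq : p.reverse with _ | ⟨a, rest⟩
  · rw [hq] at hqhead; simp at hqhead
  · rw [hq] at hqhead
    have hav : a = v := by simpa using hqhead
    rw [hav] at hq
    rcases rest with _ | ⟨w, rest'⟩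
    · have hp1 : p = [v] := by
        have := congrArg List.reverse hq; simpa using this
      rw [hp1] at hhead
      simp only [List.head?_cons, Option.some.injEq] at hhead
      exact huv hhead.symm
    · have hvw : E v w ∨ E w v := by
        have hc := hchq; rw [hq] at hc
        exact (List.isChain_cons_cons.mp hc).1
      rcases hvw with hvw | hwv
      · exact aux_walk E hacyc u v p hnd hqlast hchq hcol' hdesc rest' v w
          (by rw [hq]) hvw (Relation.ReflTransGen.single hvw)
      · rcases rest' with _ | ⟨z, rest''⟩
        · have hp2 : p = [w, v] := by
            have := congrArg List.reverse hq; simpa using this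
          rw [hp2] at hhead
          simp only [List.head?_cons, Option.some.injEq] at hhead
          exact hpar (hhead ▸ hwv)
        · have hinf : [v, w, z] <:+: p.reverse := by
            rw [hq]; exact ⟨[], rest'', rfl⟩
          have hinfp : [z, w, v] <:+: p := by
            have h2 : ([z, w, v] : List V).reverse <:+: p.reverse := by simpa using hinf
            exact List.reverse_infix.mp h2
          have hcolw : IsCollider E p w := by
            by_contra hnc
            exact hncol w ⟨z, v, hinfp⟩ hnc hwv
          obtain ⟨a', c', hac, haw, hcw⟩ := hcolw
          obtain ⟨ha, hc⟩ := triple_unique hnd hac hinfp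
          exact hacyc v ((Relation.TransGen.single (hc ▸ hcw)).tail hwv)
end

section
/- Let g_1 and g_2 be independent real random variables each having the standard Gumbel distribution, i.e., with cumulative distribution function F(x) = exp(−exp(−x)), and let θ ∈ (0,1). Then P( log θ + g_1 > log(1 − θ) + g_2 ) = θ. -/
open MeasureTheory ProbabilityTheory

/-- A real random variable `g` has the standard Gumbel distribution if its cumulative
distribution function is `x ↦ exp (−exp (−x))`. -/
def HasStdGumbelCDF {Ω : Type*} [MeasurableSpace Ω] (μ : Measure Ω) (g : Ω → ℝ) : Prop :=
  ∀ x : ℝ, μ {ω | g ω ≤ x} = ENNReal.ofReal (Real.exp (-Real.exp (-x)))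

open Real Set Filter Topology

noncomputable def gumbelPDF (b t : ℝ) : ℝ := Real.exp (-t) * Real.exp (-b * Real.exp (-t))

lemma gumbelPDF_nonneg (b t : ℝ) : 0 ≤ gumbelPDF b t := by
  unfold gumbelPDF; positivity

lemma continuous_gumbelPDF (b : ℝ) : Continuous (gumbelPDF b) := by
  unfold gumbelPDF; continuity

lemma hasDerivAt_gumbelAnti {b : ℝ} (hb : b ≠ 0) (t : ℝ) :
    HasDerivAt (fun t => (1/b) * Real.exp (-b * Real.exp (-t))) (gumbelPDF b t) t := by
  have h0 : HasDerivAt (fun t : ℝ => Real.exp (-t)) (-Real.exp (-t)) t := by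
    simpa [Function.comp_def] using (Real.hasDerivAt_exp (-t)).comp t ((hasDerivAt_id t).neg)
  have h1 : HasDerivAt (fun t : ℝ => -b * Real.exp (-t)) (b * Real.exp (-t)) t := by
    have := h0.const_mul (-b)
    exact this.congr_deriv (by ring)
  have h2 := (Real.hasDerivAt_exp _).comp t h1
  have h3 := h2.const_mul (1/b)
  refine h3.congr_deriv ?_
  unfold gumbelPDF
  field_simp

lemma tendsto_gumbelAnti_atBot {b : ℝ} (hb : 0 < b) :
    Tendsto (fun t => (1/b) * Real.exp (-b * Real.exp (-t))) atBot (𝓝 0) := by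
  have h1 : Tendsto (fun t : ℝ => Real.exp (-t)) atBot atTop :=
    Real.tendsto_exp_atTop.comp tendsto_neg_atBot_atTop
  have h2 : Tendsto (fun t : ℝ => -b * Real.exp (-t)) atBot atBot :=
    h1.const_mul_atTop_of_neg (by linarith)
  have h3 : Tendsto (fun t : ℝ => Real.exp (-b * Real.exp (-t))) atBot (𝓝 0) :=
    Real.tendsto_exp_atBot.comp h2
  simpa using h3.const_mul (1/b)

lemma tendsto_gumbelAnti_atTop {b : ℝ} (hb : 0 < b) :
    Tendsto (fun t => (1/b) * Real.exp (-b * Real.exp (-t))) atTop (𝓝 (1/b)) := by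
  have h1 : Tendsto (fun t : ℝ => Real.exp (-t)) atTop (𝓝 0) :=
    Real.tendsto_exp_atBot.comp tendsto_neg_atTop_atBot
  have h2 : Tendsto (fun t : ℝ => -b * Real.exp (-t)) atTop (𝓝 0) := by
    simpa using h1.const_mul (-b)
  have h3 : Tendsto (fun t : ℝ => Real.exp (-b * Real.exp (-t))) atTop (𝓝 1) := by
    have := Real.continuous_exp.continuousAt (x := (0:ℝ))
    simpa [Function.comp_def] using (this.tendsto.comp h2)
  simpa using h3.const_mul (1/b)

lemma integrable_gumbelPDF {b : ℝ} (hb : 0 < b) : Integrable (gumbelPDF b) := by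
  have h1 : IntegrableOn (gumbelPDF b) (Ioi 0) := by
    have hexp : IntegrableOn (fun t : ℝ => Real.exp (-t)) (Ioi 0) := by
      simpa using exp_neg_integrableOn_Ioi 0 one_pos
    refine Integrable.mono' hexp ((continuous_gumbelPDF b).aestronglyMeasurable) ?_
    filter_upwards with t
    rw [Real.norm_of_nonneg (gumbelPDF_nonneg b t)]
    unfold gumbelPDF
    have : Real.exp (-b * Real.exp (-t)) ≤ 1 := by
      rw [Real.exp_le_one_iff]
      have : 0 ≤ b * Real.exp (-t) := by positivity
      linarith
    nlinarith [Real.exp_pos (-t), gumbelPDF_nonneg b t]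
  have h2 : IntegrableOn (gumbelPDF b) (Iic 0) := by
    have hrefl : IntegrableOn (fun s => gumbelPDF b (-s)) (Ioi (-1 : ℝ)) := by
      have hderiv : ∀ x ∈ Ici (-1 : ℝ),
          HasDerivAt (fun s => -(1/b) * Real.exp (-b * Real.exp s)) (gumbelPDF b (-x)) x := by
        intro x _
        have h1' : HasDerivAt (fun s : ℝ => -b * Real.exp s) (-b * Real.exp x) x := by
          simpa using (Real.hasDerivAt_exp x).const_mul (-b : ℝ)
        have h2' := ((Real.hasDerivAt_exp _).comp x h1').const_mul (-(1/b))
        refine h2'.congr_deriv ?_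
        unfold gumbelPDF
        rw [neg_neg]
        field_simp
      have htop : Tendsto (fun s => -(1/b) * Real.exp (-b * Real.exp s)) atTop (𝓝 0) := by
        have h2 : Tendsto (fun s : ℝ => -b * Real.exp s) atTop atBot :=
          Real.tendsto_exp_atTop.const_mul_atTop_of_neg (by linarith)
        have h3 : Tendsto (fun s : ℝ => Real.exp (-b * Real.exp s)) atTop (𝓝 0) :=
          Real.tendsto_exp_atBot.comp h2
        simpa using h3.const_mul (-(1/b))
      exact integrableOn_Ioi_deriv_of_nonneg' hderiv
        (fun x _ => gumbelPDF_nonneg b (-x)) htop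
    have hpre : ((fun x : ℝ => -x) ⁻¹' Iic 0) = Ici 0 := by ext x; simp
    have key : IntegrableOn (fun s => gumbelPDF b (-s)) ((fun x : ℝ => -x) ⁻¹' Iic 0) := by
      rw [hpre]
      exact hrefl.mono_set (fun x hx => lt_of_lt_of_le (by norm_num : (-1:ℝ) < 0) hx)
    exact (MeasurePreserving.integrableOn_comp_preimage (Measure.measurePreserving_neg _)
      (Homeomorph.neg ℝ).measurableEmbedding).1 key
  rw [← integrableOn_univ, ← Set.Iic_union_Ioi (a := (0:ℝ))]
  exact h2.union h1

lemma integral_Iic_gumbelPDF {b : ℝ} (hb : 0 < b) (x : ℝ) :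
    ∫ t in Iic x, gumbelPDF b t = (1/b) * Real.exp (-b * Real.exp (-x)) := by
  rw [integral_Iic_of_hasDerivAt_of_tendsto' (fun t _ => hasDerivAt_gumbelAnti hb.ne' t)
      (integrable_gumbelPDF hb).integrableOn (tendsto_gumbelAnti_atBot hb)]
  simp

lemma integral_gumbelPDF {b : ℝ} (hb : 0 < b) : ∫ t, gumbelPDF b t = 1/b := by
  rw [integral_of_hasDerivAt_of_tendsto (fun t => hasDerivAt_gumbelAnti hb.ne' t)
      (integrable_gumbelPDF hb) (tendsto_gumbelAnti_atBot hb) (tendsto_gumbelAnti_atTop hb)]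
  simp

lemma lintegral_Iic_gumbelPDF {b : ℝ} (hb : 0 < b) (x : ℝ) :
    ∫⁻ t in Iic x, ENNReal.ofReal (gumbelPDF b t)
      = ENNReal.ofReal ((1/b) * Real.exp (-b * Real.exp (-x))) := by
  rw [← ofReal_integral_eq_lintegral_ofReal (integrable_gumbelPDF hb).integrableOn
      (ae_of_all _ fun t => gumbelPDF_nonneg b t), integral_Iic_gumbelPDF hb]

lemma lintegral_gumbelPDF {b : ℝ} (hb : 0 < b) :
    ∫⁻ t, ENNReal.ofReal (gumbelPDF b t) = ENNReal.ofReal (1/b) := by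
  rw [← ofReal_integral_eq_lintegral_ofReal (integrable_gumbelPDF hb)
      (ae_of_all _ fun t => gumbelPDF_nonneg b t), integral_gumbelPDF hb]

/-- The standard Gumbel measure on `ℝ`. -/
noncomputable def gumbelMeasure : Measure ℝ :=
  volume.withDensity fun t => ENNReal.ofReal (gumbelPDF 1 t)

lemma gumbelMeasure_Iic (x : ℝ) :
    gumbelMeasure (Iic x) = ENNReal.ofReal (Real.exp (-Real.exp (-x))) := by
  rw [gumbelMeasure, withDensity_apply _ measurableSet_Iic, lintegral_Iic_gumbelPDF one_pos]
  norm_num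

instance : IsProbabilityMeasure gumbelMeasure := by
  constructor
  rw [gumbelMeasure, withDensity_apply _ MeasurableSet.univ, Measure.restrict_univ,
    lintegral_gumbelPDF one_pos]
  norm_num

lemma gumbelMeasure_singleton (y : ℝ) : gumbelMeasure {y} = 0 := by
  rw [gumbelMeasure, withDensity_apply _ (measurableSet_singleton y),
    Measure.restrict_eq_zero.2 (Real.volume_singleton), lintegral_zero_measure]

lemma gumbelMeasure_Iio (x : ℝ) :
    gumbelMeasure (Iio x) = ENNReal.ofReal (Real.exp (-Real.exp (-x))) := by
  have h : gumbelMeasure (Iic x) = gumbelMeasure (Iio x) + gumbelMeasure {x} := by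
    rw [← measure_union (by simp) (measurableSet_singleton x), Iio_union_right]
  rw [gumbelMeasure_singleton, add_zero] at h
  rw [← h, gumbelMeasure_Iic]

lemma map_eq_gumbelMeasure {Ω : Type*} [MeasurableSpace Ω] (μ : Measure Ω)
    [IsProbabilityMeasure μ] (g : Ω → ℝ) (hg : Measurable g) (hG : HasStdGumbelCDF μ g) :
    μ.map g = gumbelMeasure := by
  haveI : IsProbabilityMeasure (μ.map g) := Measure.isProbabilityMeasure_map hg.aemeasurable
  refine Measure.ext_of_Iic (μ.map g) gumbelMeasure fun x => ?_
  rw [Measure.map_apply hg measurableSet_Iic, gumbelMeasure_Iic]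
  exact hG x

/-- (Two-category Gumbel-max trick.) If `g₁` and `g₂` are independent
standard Gumbel random variables and `θ ∈ (0,1)`, then
`P(log θ + g₁ > log (1 − θ) + g₂) = θ`. -/
theorem gumbel_max_bernoulli {Ω : Type*} [MeasurableSpace Ω]
    (μ : Measure Ω) [IsProbabilityMeasure μ]
    (g₁ g₂ : Ω → ℝ) (hg₁ : Measurable g₁) (hg₂ : Measurable g₂)
    (hindep : IndepFun g₁ g₂ μ)
    (hG₁ : HasStdGumbelCDF μ g₁) (hG₂ : HasStdGumbelCDF μ g₂)
    (θ : ℝ) (hθ : θ ∈ Set.Ioo (0 : ℝ) 1) :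
    μ {ω | Real.log θ + g₁ ω > Real.log (1 - θ) + g₂ ω} = ENNReal.ofReal θ := by
  obtain ⟨hθ0, hθ1⟩ := hθ
  have h1θ : 0 < 1 - θ := by linarith
  set c : ℝ := Real.log θ - Real.log (1 - θ) with hc
  set a : ℝ := (1 - θ) / θ with ha
  have ha0 : 0 < a := by positivity
  have hexpc : ∀ x : ℝ, Real.exp (-(x + c)) = a * Real.exp (-x) := by
    intro x
    rw [neg_add, Real.exp_add, hc, neg_sub, Real.exp_sub, Real.exp_log h1θ, Real.exp_log hθ0, ha]
    ring
  have hS : MeasurableSet {p : ℝ × ℝ | p.2 < p.1 + c} :=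
    measurableSet_lt measurable_snd (measurable_fst.add_const c)
  have hset : {ω | Real.log θ + g₁ ω > Real.log (1 - θ) + g₂ ω}
      = (fun ω => (g₁ ω, g₂ ω)) ⁻¹' {p : ℝ × ℝ | p.2 < p.1 + c} := by
    ext ω
    simp only [Set.mem_setOf_eq, Set.mem_preimage, gt_iff_lt, hc]
    constructor <;> intro h <;> linarith
  rw [hset, ← Measure.map_apply (hg₁.prodMk hg₂) hS,
    (indepFun_iff_map_prod_eq_prod_map_map hg₁.aemeasurable hg₂.aemeasurable).1 hindep,
    map_eq_gumbelMeasure μ g₁ hg₁ hG₁, map_eq_gumbelMeasure μ g₂ hg₂ hG₂,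
    Measure.prod_apply hS]
  have hfiber : ∀ x : ℝ, (Prod.mk x ⁻¹' {p : ℝ × ℝ | p.2 < p.1 + c}) = Iio (x + c) := by
    intro x; ext y; simp [Set.mem_setOf_eq]
  have step1 : ∫⁻ x, gumbelMeasure (Prod.mk x ⁻¹' {p : ℝ × ℝ | p.2 < p.1 + c}) ∂gumbelMeasure
      = ∫⁻ x, ENNReal.ofReal (Real.exp (-(a * Real.exp (-x)))) ∂gumbelMeasure := by
    refine lintegral_congr fun x => ?_
    rw [hfiber x, gumbelMeasure_Iio, hexpc x]
  rw [step1]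
  have hmf : Measurable fun x : ℝ => ENNReal.ofReal (Real.exp (-(a * Real.exp (-x)))) := by
    apply Measurable.ennreal_ofReal
    exact (Real.continuous_exp.comp
      ((continuous_const.mul (Real.continuous_exp.comp continuous_neg)).neg)).measurable
  have hmpdf : Measurable fun t : ℝ => ENNReal.ofReal (gumbelPDF 1 t) :=
    (continuous_gumbelPDF 1).measurable.ennreal_ofReal
  rw [gumbelMeasure, lintegral_withDensity_eq_lintegral_mul volume hmpdf hmf]
  have step2 : ∀ x : ℝ,
      ((fun t => ENNReal.ofReal (gumbelPDF 1 t))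
        * fun x => ENNReal.ofReal (Real.exp (-(a * Real.exp (-x))))) x
      = ENNReal.ofReal (gumbelPDF (1 + a) x) := by
    intro x
    simp only [Pi.mul_apply]
    rw [← ENNReal.ofReal_mul (gumbelPDF_nonneg 1 x)]
    congr 1
    unfold gumbelPDF
    rw [mul_assoc, ← Real.exp_add]
    congr 2
    ring
  rw [lintegral_congr step2, lintegral_gumbelPDF (by linarith : (0:ℝ) < 1 + a)]
  congr 1
  rw [ha]
  field_simp
  ring
end
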